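/- Let k ≥ 1 and j ≥ 1 be integers, let t be an integer with 0 ≤ t ≤ 2k, and let F : 𝔽₂ʲ → 𝔽₂ be a Boolean function. For n ≥ 1 define A_n = Σ_{l=0}^{n} ( Σ_{m=0}^{j} C_m(F)(-1)^{Σ_{i=0}^{t} C(t,i)C(l+m,2k−i)} ) C(n,l) and B_n = Σ_{l=0}^{n+1} ( Σ_{m=0}^{j} C_m(F)(-1)^{Σ_{i=0}^{t} C(t,i)C(l+m,2k+1−i)} ) C(n+1,l), so that A_n = S( [Σ_{i=0}^{t} C(t,i)σ_{n+j,2k−i}] + F ) and B_n = S( [Σ_{i=0}^{t} C(t,i)σ_{n+1+j,2k+1−i}] + F ) whenever these Boolean functions are defined. Then A_n = B_n for every positive integer n if and only if F is balanced, i.e. S(F) = 0. -/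

import Mathlib

/-- Exponential sum of a Boolean function in `N` variables. -/
def expSum {N : ℕ} (G : (Fin N → ZMod 2) → ZMod 2) : ℤ :=
  ∑ x : Fin N → ZMod 2, (-1 : ℤ) ^ (G x).val

/-- Elementary symmetric Boolean polynomial of degree `k` in `n` variables
(`sigma n 0` is the constant `1`). -/
def sigma (n k : ℕ) (x : Fin n → ZMod 2) : ZMod 2 :=
  ∑ A ∈ Finset.powersetCard k (Finset.univ : Finset (Fin n)), ∏ i ∈ A, x i

/-- Hamming weight of a Boolean vector. -/
def wt {j : ℕ} (x : Fin j → ZMod 2) : ℕ :=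
  (Finset.univ.filter (fun i => x i = 1)).card

/-- The weight-coefficients `C_m(F) = Σ_{wt(x)=m} (-1)^{F(x)}` of a Boolean function. -/
def coefC {j : ℕ} (F : (Fin j → ZMod 2) → ZMod 2) (m : ℕ) : ℤ :=
  ∑ x ∈ Finset.univ.filter (fun x : Fin j → ZMod 2 => wt x = m), (-1 : ℤ) ^ (F x).val

/-!
Since `σ_{N,r}(x) ≡ C(wt x, r) (mod 2)`, splitting `x` into its first `j` coordinates (the input
of `F`) and its last `n` ones turns both exponential sums into the weighted sums `A_n`, `B_n`.
Because `t ≤ 2k`, Vandermonde collapses the exponents to `C(t + w, 2k)` and `C(t + w, 2k + 1)`.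
Pascal's rule for `C(n + 1, l)` together with the parity identity
`(-1)^C(w, 2k+1) + (-1)^C(w+1, 2k+1) = (-1)^C(w, 2k) + 1` then gives `B_n = A_n + 2^n S(F)`.
-/

open Finset

lemma neg_one_pow_val_add (a b : ZMod 2) :
    (-1 : ℤ) ^ (a + b).val = (-1) ^ a.val * (-1) ^ b.val := by
  revert a b; decide

lemma neg_one_pow_val_natCast (n : ℕ) : (-1 : ℤ) ^ (n : ZMod 2).val = (-1) ^ n := by
  rw [ZMod.val_natCast, ← neg_one_pow_eq_pow_mod_two]

lemma ite_eq_one_zmod_two (a : ZMod 2) : (if a = 1 then 1 else 0) = a := by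
  revert a; decide

lemma sigma_eq_choose_wt (N r : ℕ) (x : Fin N → ZMod 2) :
    sigma N r x = ((wt x).choose r : ZMod 2) := by
  set S := univ.filter (fun i => x i = 1)
  have hsub : (powersetCard r univ).filter (· ⊆ S) = powersetCard r S := by
    ext A
    simp only [mem_filter, mem_powersetCard, subset_univ, true_and]
    tauto
  calc sigma N r x
      = ∑ A ∈ powersetCard r univ, ∏ i ∈ A, if x i = 1 then (1 : ZMod 2) else 0 := by
        simp only [sigma, ite_eq_one_zmod_two]
    _ = ((wt x).choose r : ZMod 2) := by
        have hA : ∀ A : Finset (Fin N), (∀ i ∈ A, x i = 1) ↔ A ⊆ S := fun A => by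
          simp [S, subset_iff]
        simp only [prod_boole, hA, sum_boole, hsub, card_powersetCard]
        rfl

lemma wt_le {n : ℕ} (z : Fin n → ZMod 2) : wt z ≤ n :=
  (card_filter_le _ _).trans_eq (card_fin n)

lemma sum_comp_wt {M : Type*} [AddCommMonoid M] (n : ℕ) (f : ℕ → M) :
    ∑ z : Fin n → ZMod 2, f (wt z) = ∑ l ∈ range (n + 1), n.choose l • f l := by
  have hsupp : ∑ z : Fin n → ZMod 2, f (wt z) = ∑ A ∈ (univ : Finset (Fin n)).powerset, f #A :=
    sum_nbij' (fun z => univ.filter (fun i => z i = 1)) (fun A i => if i ∈ A then 1 else 0)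
      (by simp) (by simp)
      (fun z _ => funext fun i => by simp [ite_eq_one_zmod_two])
      (fun A _ => by ext; simp)
      (fun z _ => rfl)
  rw [hsupp, sum_powerset_apply_card, card_univ, Fintype.card_fin]

lemma sum_mul_neg_one_pow_eq_sum_coefC {j : ℕ} (F : (Fin j → ZMod 2) → ZMod 2) (f : ℕ → ℤ) :
    ∑ y : Fin j → ZMod 2, f (wt y) * (-1) ^ (F y).val
      = ∑ m ∈ range (j + 1), f m * coefC F m := by
  rw [← sum_fiberwise_of_maps_to (g := wt) (t := range (j + 1))
    (fun y _ => mem_range.mpr (Nat.lt_succ_of_le (wt_le y)))]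
  refine sum_congr rfl fun m _ => ?_
  rw [coefC, mul_sum]
  exact sum_congr rfl fun y hy => by rw [(mem_filter.mp hy).2]

lemma sum_coefC {j : ℕ} (F : (Fin j → ZMod 2) → ZMod 2) :
    ∑ m ∈ range (j + 1), coefC F m = expSum F := by
  simpa [expSum] using (sum_mul_neg_one_pow_eq_sum_coefC F 1).symm

def finAddProdEquiv (α : Type*) (n j : ℕ) : (Fin j → α) × (Fin n → α) ≃ (Fin (n + j) → α) :=
  (Equiv.sumArrowEquivProdArrow _ _ _).symm.trans
    ((finSumFinEquiv.trans (finCongr (add_comm j n))).arrowCongr (Equiv.refl α))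

lemma finAddProdEquiv_apply_castLE {α : Type*} {n j : ℕ} (y : Fin j → α) (z : Fin n → α)
    (i : Fin j) : finAddProdEquiv α n j (y, z) (Fin.castLE (Nat.le_add_left j n) i) = y i := by
  have : Fin.castLE (Nat.le_add_left j n) i = finCongr (add_comm j n) (Fin.castAdd n i) := by
    ext; simp
  simp [finAddProdEquiv, this]

lemma wt_finAddProdEquiv {n j : ℕ} (y : Fin j → ZMod 2) (z : Fin n → ZMod 2) :
    wt (finAddProdEquiv (ZMod 2) n j (y, z)) = wt y + wt z := by
  simp only [wt, card_filter]
  rw [← Fintype.sum_equiv (finSumFinEquiv.trans (finCongr (add_comm j n))) _ _ (fun _ => rfl),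
    Fintype.sum_sum_type]
  simp [finAddProdEquiv]

lemma expSum_natCast_comp_wt_add {n j : ℕ} (g : ℕ → ℕ) (F : (Fin j → ZMod 2) → ZMod 2) :
    expSum (fun x : Fin (n + j) → ZMod 2 =>
        (g (wt x) : ZMod 2) + F (fun i => x (Fin.castLE (Nat.le_add_left j n) i)))
      = ∑ l ∈ range (n + 1),
          (∑ m ∈ range (j + 1), coefC F m * (-1) ^ g (l + m)) * (n.choose l : ℤ) := by
  have hsplit : ∀ z y, (-1 : ℤ) ^ ((g (wt (finAddProdEquiv (ZMod 2) n j (y, z))) : ZMod 2) +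
        F (fun i => finAddProdEquiv (ZMod 2) n j (y, z) (Fin.castLE (Nat.le_add_left j n) i))).val
      = (-1) ^ g (wt z + wt y) * (-1) ^ (F y).val := fun z y => by
    rw [neg_one_pow_val_add, neg_one_pow_val_natCast, wt_finAddProdEquiv, add_comm (wt y)]
    simp only [finAddProdEquiv_apply_castLE]
  rw [expSum, ← Fintype.sum_equiv (finAddProdEquiv (ZMod 2) n j) _ _ (fun _ => rfl),
    Fintype.sum_prod_type_right]
  simp only [hsplit]
  rw [Fintype.sum_congr _ _
      fun z => sum_mul_neg_one_pow_eq_sum_coefC F (fun m => (-1) ^ g (wt z + m)),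
    sum_comp_wt n (fun l => ∑ m ∈ range (j + 1), (-1) ^ g (l + m) * coefC F m)]
  simp only [nsmul_eq_mul, mul_comm]

lemma expSum_sum_choose_mul_sigma_add (n j t r : ℕ) (F : (Fin j → ZMod 2) → ZMod 2) :
    expSum (fun x : Fin (n + j) → ZMod 2 =>
        (∑ i ∈ range (t + 1), (t.choose i : ZMod 2) * sigma (n + j) (r - i) x) +
          F (fun i => x (Fin.castLE (Nat.le_add_left j n) i)))
      = ∑ l ∈ range (n + 1),
          (∑ m ∈ range (j + 1), coefC F m *
            (-1) ^ (∑ i ∈ range (t + 1), t.choose i * (l + m).choose (r - i))) *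
              (n.choose l : ℤ) := by
  rw [← expSum_natCast_comp_wt_add (fun w => ∑ i ∈ range (t + 1), t.choose i * w.choose (r - i))]
  simp only [sigma_eq_choose_wt, Nat.cast_sum, Nat.cast_mul]

lemma sum_range_choose_mul_choose_tsub {t r : ℕ} (h : t ≤ r) (w : ℕ) :
    ∑ i ∈ range (t + 1), t.choose i * w.choose (r - i) = (t + w).choose r := by
  rw [Nat.add_choose_eq, Nat.sum_antidiagonal_eq_sum_range_succ_mk]
  refine sum_subset (range_subset_range.mpr (by omega)) fun i hi hit => ?_
  rw [Nat.choose_eq_zero_of_lt (by simp at hi hit; omega), zero_mul]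

/-- `C(w, 2k+1) (2k+1) = C(w, 2k) (w - 2k)`, so an odd `C(w, 2k+1)` forces an odd `C(w, 2k)`;
with Pascal's rule this leaves only parity cases that satisfy the identity. -/
lemma neg_one_pow_choose_add_neg_one_pow_choose_succ (k w : ℕ) :
    (-1 : ℤ) ^ w.choose (2 * k + 1) + (-1) ^ (w + 1).choose (2 * k + 1)
      = (-1) ^ w.choose (2 * k) + 1 := by
  have hodd : Odd (w.choose (2 * k + 1)) → Odd (w.choose (2 * k)) := fun ho => by
    have h := Nat.choose_succ_right_eq w (2 * k)
    exact (Nat.odd_mul.mp (h ▸ ho.mul (odd_two_mul_add_one k))).1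
  rw [Nat.choose_succ_succ, pow_add]
  rcases Nat.even_or_odd (w.choose (2 * k)) with he | ho
  · have he' : Even (w.choose (2 * k + 1)) :=
      Nat.not_odd_iff_even.mp fun ho => Nat.not_odd_iff_even.mpr he (hodd ho)
    rw [he.neg_one_pow, he'.neg_one_pow]; norm_num
  · rw [ho.neg_one_pow]; ring

lemma sum_choose_succ_eq_add_two_pow_mul {R : Type*} [CommSemiring R] {a b : ℕ → R}
    (hab : ∀ w, b w + b (w + 1) = a w + 1) (c : ℕ → R) (J n : ℕ) :
    ∑ l ∈ range (n + 2), (∑ m ∈ range (J + 1), c m * b (l + m)) * ((n + 1).choose l : R)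
      = ∑ l ∈ range (n + 1), (∑ m ∈ range (J + 1), c m * a (l + m)) * (n.choose l : R)
          + 2 ^ n * ∑ m ∈ range (J + 1), c m := by
  have hpair : ∀ l, (∑ m ∈ range (J + 1), c m * b (l + m))
      + ∑ m ∈ range (J + 1), c m * b (l + 1 + m)
      = (∑ m ∈ range (J + 1), c m * a (l + m)) + ∑ m ∈ range (J + 1), c m := fun l => by
    rw [← sum_add_distrib, ← sum_add_distrib]
    refine sum_congr rfl fun m _ => ?_
    rw [← mul_add, add_right_comm l 1, hab, mul_add, mul_one]
  have htwo : ∑ l ∈ range (n + 1), (n.choose l : R) = 2 ^ n := by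
    rw [← Nat.cast_sum, Nat.sum_range_choose, Nat.cast_pow, Nat.cast_ofNat]
  calc ∑ l ∈ range (n + 2), (∑ m ∈ range (J + 1), c m * b (l + m)) * ((n + 1).choose l : R)
      = ∑ l ∈ range (n + 1), (n.choose l : R) * ((∑ m ∈ range (J + 1), c m * b (l + m))
          + ∑ m ∈ range (J + 1), c m * b (l + 1 + m)) := by
        simp only [mul_comm _ ((Nat.choose _ _ : ℕ) : R), mul_add, sum_add_distrib]
        exact sum_choose_succ_mul (fun l _ => ∑ m ∈ range (J + 1), c m * b (l + m)) n
    _ = _ := by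
        simp only [hpair, mul_add, sum_add_distrib, ← sum_mul, htwo, mul_comm]

theorem perturbation_shift_iff_balanced_general_general
    (k j t : ℕ) (ht : t ≤ 2 * k)
    (F : (Fin j → ZMod 2) → ZMod 2)
    (A B : ℕ → ℤ)
    (hA : ∀ n : ℕ, A n =
      ∑ l ∈ Finset.range (n + 1),
        (∑ m ∈ Finset.range (j + 1),
          coefC F m * (-1 : ℤ) ^ (∑ i ∈ Finset.range (t + 1),
            Nat.choose t i * Nat.choose (l + m) (2 * k - i))) * (n.choose l : ℤ))
    (hB : ∀ n : ℕ, B n =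
      ∑ l ∈ Finset.range (n + 2),
        (∑ m ∈ Finset.range (j + 1),
          coefC F m * (-1 : ℤ) ^ (∑ i ∈ Finset.range (t + 1),
            Nat.choose t i * Nat.choose (l + m) (2 * k + 1 - i))) *
              ((n + 1).choose l : ℤ)) :
    (∀ n : ℕ, 2 * k ≤ n + j →
      A n = expSum (fun x : Fin (n + j) → ZMod 2 =>
          (∑ i ∈ Finset.range (t + 1),
            (Nat.choose t i : ZMod 2) * sigma (n + j) (2 * k - i) x) +
            F (fun i => x (Fin.castLE (Nat.le_add_left j n) i))) ∧
      B n = expSum (fun x : Fin (n + 1 + j) → ZMod 2 =>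
          (∑ i ∈ Finset.range (t + 1),
            (Nat.choose t i : ZMod 2) * sigma (n + 1 + j) (2 * k + 1 - i) x) +
            F (fun i => x (Fin.castLE (Nat.le_add_left j (n + 1)) i)))) ∧
    ((∀ n : ℕ, 1 ≤ n → A n = B n) ↔ expSum F = 0) := by
  refine ⟨fun n _ => ⟨?_, ?_⟩, ?_⟩
  · rw [hA, expSum_sum_choose_mul_sigma_add]
  · rw [hB, expSum_sum_choose_mul_sigma_add]
  have hBA : ∀ n, B n = A n + 2 ^ n * expSum F := fun n => by
    simp only [hA, hB, ← sum_coefC, sum_range_choose_mul_choose_tsub ht,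
      sum_range_choose_mul_choose_tsub (ht.trans (Nat.le_succ _))]
    exact sum_choose_succ_eq_add_two_pow_mul
      (fun w => neg_one_pow_choose_add_neg_one_pow_choose_succ k (t + w)) _ j n
  constructor
  · intro h
    have h1 := hBA 1
    rw [← h 1 le_rfl] at h1
    linarith
  · intro h n _
    rw [hBA, h, mul_zero, add_zero]

/-- With `A_n = Σ_{l=0}^n (Σ_m C_m(F)(-1)^{Σ_i C(t,i)C(l+m,2k−i)}) C(n,l)` and
`B_n = Σ_{l=0}^{n+1} (Σ_m C_m(F)(-1)^{Σ_i C(t,i)C(l+m,2k+1−i)}) C(n+1,l)`, so that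
`A_n = S([Σ_i C(t,i)σ_{n+j,2k−i}] + F)` and
`B_n = S([Σ_i C(t,i)σ_{n+1+j,2k+1−i}] + F)` whenever these are defined, one has
`A_n = B_n` for every positive `n` if and only if `F` is balanced. -/
theorem perturbation_shift_iff_balanced_general
    (k j t : ℕ) (hk : 1 ≤ k) (hj : 1 ≤ j) (ht : t ≤ 2 * k)
    (F : (Fin j → ZMod 2) → ZMod 2)
    (A B : ℕ → ℤ)
    (hA : ∀ n : ℕ, A n =
      ∑ l ∈ Finset.range (n + 1),
        (∑ m ∈ Finset.range (j + 1),
          coefC F m * (-1 : ℤ) ^ (∑ i ∈ Finset.range (t + 1),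
            Nat.choose t i * Nat.choose (l + m) (2 * k - i))) * (n.choose l : ℤ))
    (hB : ∀ n : ℕ, B n =
      ∑ l ∈ Finset.range (n + 2),
        (∑ m ∈ Finset.range (j + 1),
          coefC F m * (-1 : ℤ) ^ (∑ i ∈ Finset.range (t + 1),
            Nat.choose t i * Nat.choose (l + m) (2 * k + 1 - i))) *
              ((n + 1).choose l : ℤ)) :
    (∀ n : ℕ, 2 * k ≤ n + j →
      A n = expSum (fun x : Fin (n + j) → ZMod 2 =>
          (∑ i ∈ Finset.range (t + 1),
            (Nat.choose t i : ZMod 2) * sigma (n + j) (2 * k - i) x) +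
            F (fun i => x (Fin.castLE (Nat.le_add_left j n) i))) ∧
      B n = expSum (fun x : Fin (n + 1 + j) → ZMod 2 =>
          (∑ i ∈ Finset.range (t + 1),
            (Nat.choose t i : ZMod 2) * sigma (n + 1 + j) (2 * k + 1 - i) x) +
            F (fun i => x (Fin.castLE (Nat.le_add_left j (n + 1)) i)))) ∧
    ((∀ n : ℕ, 1 ≤ n → A n = B n) ↔ expSum F = 0) :=
  perturbation_shift_iff_balanced_general_general k j t ht F A B hA hB
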